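/- Derivative of an STP-quadratic form: let A be a real p×q matrix, n ≥ 1, l = lcm(q,n), and t = lcm(pl/q, n). Define F : ℝⁿ → Matrix (Fin (pl/q)) (Fin (l/n)) ℝ by F(x) = (A ⊗ I_{l/q})(X ⊗ I_{l/n}) (the semi-tensor product A ⋉ x), and define the STP-quadratic map Q(x) := (Xᵀ ⊗ I_{t/n}) · (F(x) ⊗ I_{tq/(pl)}) (the semi-tensor product xᵀ ⋉ A ⋉ x), where X is the n×1 column matrix of x. Then at every x ∈ ℝⁿ the Fréchet derivative of Q in direction h ∈ ℝⁿ equals (Hᵀ ⊗ I_{t/n})(F(x) ⊗ I_{tq/(pl)}) + (Xᵀ ⊗ I_{t/n})(F(h) ⊗ I_{tq/(pl)}); equivalently, the partial derivative of Q with respect to x_i is (E_iᵀ ⊗ I_{t/n})(F(x) ⊗ I_{tq/(pl)}) + (Xᵀ ⊗ I_{t/n})(F(e_i) ⊗ I_{tq/(pl)}), with E_i the column matrix of δ_n^i. -/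

import Mathlib

/-! `Q(x) = xᵀ ⋉ A ⋉ x` is the diagonal `B(x, x)` of the map `B(u, v) = uᵀ ⋉ A ⋉ v`, which is
bilinear because Kronecker and matrix products are. In finite dimension `B` is automatically
continuous, so the product rule for continuous bilinear maps gives `DQ(x) h = B(h, x) + B(x, h)`. -/

open Matrix

noncomputable section

/-- Kronecker product of real matrices with `Fin`-indexed sizes, indices identified
via the lexicographic equivalence `Fin a × Fin b ≃ Fin (a*b)`. -/
def kron {a b c d : ℕ} (A : Matrix (Fin a) (Fin b) ℝ) (B : Matrix (Fin c) (Fin d) ℝ) :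
    Matrix (Fin (a * c)) (Fin (b * d)) ℝ := fun i j =>
  A (finProdFinEquiv.symm i).1 (finProdFinEquiv.symm j).1 *
    B (finProdFinEquiv.symm i).2 (finProdFinEquiv.symm j).2

/-- Recast a matrix along equalities of its `Fin` dimensions. -/
def castM {a b c d : ℕ} (h₁ : a = b) (h₂ : c = d) (A : Matrix (Fin a) (Fin c) ℝ) :
    Matrix (Fin b) (Fin d) ℝ := fun i j => A (finCongr h₁.symm i) (finCongr h₂.symm j)

/-- The `i`-th standard basis vector of `ℝ^k`, as a `k × 1` column matrix. -/
def eVec (k : ℕ) (i : Fin k) : Matrix (Fin k) (Fin 1) ℝ := fun j _ => if j = i then 1 else 0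

/-- A vector of `ℝ^k`, as a `k × 1` column matrix. -/
def colM {k : ℕ} (x : Fin k → ℝ) : Matrix (Fin k) (Fin 1) ℝ := fun j _ => x j

attribute [local instance] Matrix.normedAddCommGroup Matrix.normedSpace

/-- The semi-tensor product `A ⋉ x` of a `p × q` matrix `A` with a vector `x ∈ ℝⁿ`
(identified with its `n × 1` column matrix), where `l = lcm(q, n)`:
`A ⋉ x = (A ⊗ I_{l/q}) · (X ⊗ I_{l/n})`, a matrix of size `(p·l/q) × (l/n)`. -/
def stpMatVec {p q : ℕ} (n : ℕ) (A : Matrix (Fin p) (Fin q) ℝ) (x : Fin n → ℝ) :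
    Matrix (Fin (p * (Nat.lcm q n / q))) (Fin (Nat.lcm q n / n)) ℝ :=
  kron A (1 : Matrix (Fin (Nat.lcm q n / q)) (Fin (Nat.lcm q n / q)) ℝ) *
    castM
      (by rw [Nat.mul_div_cancel' (Nat.dvd_lcm_right q n), Nat.mul_div_cancel' (Nat.dvd_lcm_left q n)])
      (one_mul _)
      (kron (colM x) (1 : Matrix (Fin (Nat.lcm q n / n)) (Fin (Nat.lcm q n / n)) ℝ))

/-- `t = lcm(pl/q, n)` where `l = lcm(q, n)`. -/
def tDim (p q n : ℕ) : ℕ := Nat.lcm (p * Nat.lcm q n / q) n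

/-- `s = tq/(pl)`, the size of the second identity factor in the STP-quadratic form. -/
def sDim (p q n : ℕ) : ℕ := tDim p q n * q / (p * Nat.lcm q n)

/-- Dimension bookkeeping: `n · (t/n) = (p · (l/q)) · (tq/(pl))` (both are equal to `t`). -/
lemma dim_eq (p q n : ℕ) :
    n * (tDim p q n / n) = p * (Nat.lcm q n / q) * sDim p q n := by
  rcases Nat.eq_zero_or_pos q with hq | hq
  · subst hq
    simp [tDim, sDim, Nat.lcm]
  · have hql : q ∣ Nat.lcm q n := Nat.dvd_lcm_left q n
    have h1 : p * (Nat.lcm q n / q) = p * Nat.lcm q n / q := (Nat.mul_div_assoc p hql).symm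
    have hpl : p * Nat.lcm q n = p * Nat.lcm q n / q * q := by
      rw [← h1, mul_assoc, Nat.div_mul_cancel hql]
    have hs : sDim p q n = tDim p q n / (p * Nat.lcm q n / q) := by
      have h2 : tDim p q n * q / (p * Nat.lcm q n / q * q) =
          tDim p q n / (p * Nat.lcm q n / q) := Nat.mul_div_mul_right _ _ hq
      rw [sDim]
      conv_lhs => rw [hpl]
      exact h2
    have hnt : n ∣ tDim p q n := Nat.dvd_lcm_right _ _
    have hdt : p * Nat.lcm q n / q ∣ tDim p q n := Nat.dvd_lcm_left _ _
    rw [h1, hs, Nat.mul_div_cancel' hnt, Nat.mul_div_cancel' hdt]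

/-- The bilinear building block `(Uᵀ ⊗ I_{t/n}) · ((A ⋉ v) ⊗ I_{tq/(pl)})`;
the STP-quadratic map is `Q(x) = stpQuadBil A x x = xᵀ ⋉ A ⋉ x`. -/
def stpQuadBil {p q : ℕ} (n : ℕ) (A : Matrix (Fin p) (Fin q) ℝ) (u v : Fin n → ℝ) :
    Matrix (Fin (1 * (tDim p q n / n))) (Fin (Nat.lcm q n / n * sDim p q n)) ℝ :=
  kron (colM u)ᵀ (1 : Matrix (Fin (tDim p q n / n)) (Fin (tDim p q n / n)) ℝ) *
    castM (dim_eq p q n).symm rfl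
      (kron (stpMatVec n A v) (1 : Matrix (Fin (sDim p q n)) (Fin (sDim p q n)) ℝ))

theorem ContinuousLinearMap.hasFDerivAt_apply_self {𝕜 E F : Type*} [NontriviallyNormedField 𝕜]
    [NormedAddCommGroup E] [NormedSpace 𝕜 E] [NormedAddCommGroup F] [NormedSpace 𝕜 F]
    (B : E →L[𝕜] E →L[𝕜] F) (x : E) : HasFDerivAt (fun y => B y y) (B.flip x + B x) x := by
  have hB : HasFDerivAt (fun y => B y y) _ x :=
    B.hasFDerivAt_of_bilinear (hasFDerivAt_id x) (hasFDerivAt_id x)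
  convert hB using 1
  ext h
  simp [add_comm]

lemma kron_add_left {a b c d : ℕ} (A B : Matrix (Fin a) (Fin b) ℝ)
    (C : Matrix (Fin c) (Fin d) ℝ) : kron (A + B) C = kron A C + kron B C := by
  ext i j
  simp [kron, add_mul]

lemma kron_smul_left {a b c d : ℕ} (r : ℝ) (A : Matrix (Fin a) (Fin b) ℝ)
    (C : Matrix (Fin c) (Fin d) ℝ) : kron (r • A) C = r • kron A C := by
  ext i j
  simp [kron, mul_assoc]

lemma castM_add {a b c d : ℕ} (h₁ : a = b) (h₂ : c = d) (A B : Matrix (Fin a) (Fin c) ℝ) :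
    castM h₁ h₂ (A + B) = castM h₁ h₂ A + castM h₁ h₂ B := rfl

lemma castM_smul {a b c d : ℕ} (h₁ : a = b) (h₂ : c = d) (r : ℝ) (A : Matrix (Fin a) (Fin c) ℝ) :
    castM h₁ h₂ (r • A) = r • castM h₁ h₂ A := rfl

lemma colM_add {k : ℕ} (u v : Fin k → ℝ) : colM (u + v) = colM u + colM v := rfl

lemma colM_smul {k : ℕ} (r : ℝ) (u : Fin k → ℝ) : colM (r • u) = r • colM u := rfl

section STP

variable {p q : ℕ} (n : ℕ) (A : Matrix (Fin p) (Fin q) ℝ)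

lemma stpMatVec_add (u v : Fin n → ℝ) :
    stpMatVec n A (u + v) = stpMatVec n A u + stpMatVec n A v := by
  unfold stpMatVec
  rw [colM_add, kron_add_left, castM_add]
  exact Matrix.mul_add _ _ _

lemma stpMatVec_smul (r : ℝ) (u : Fin n → ℝ) :
    stpMatVec n A (r • u) = r • stpMatVec n A u := by
  unfold stpMatVec
  rw [colM_smul, kron_smul_left, castM_smul]
  exact Matrix.mul_smul _ _ _

lemma isBilinearMap_stpQuadBil : IsBilinearMap ℝ (stpQuadBil n A) where
  add_left u u' v := by
    rw [stpQuadBil, colM_add, Matrix.transpose_add, kron_add_left, Matrix.add_mul]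
    rfl
  smul_left r u v := by
    rw [stpQuadBil, colM_smul, Matrix.transpose_smul, kron_smul_left, Matrix.smul_mul]
    rfl
  add_right u v v' := by
    rw [stpQuadBil, stpMatVec_add, kron_add_left, castM_add, Matrix.mul_add]
    rfl
  smul_right r u v := by
    rw [stpQuadBil, stpMatVec_smul, kron_smul_left, castM_smul, Matrix.mul_smul]
    rfl

end STP

theorem stp_quadratic_deriv_general (p q n : ℕ) (A : Matrix (Fin p) (Fin q) ℝ)
    (x : Fin n → ℝ) :
    ∃ D : (Fin n → ℝ) →L[ℝ]
        Matrix (Fin (1 * (tDim p q n / n))) (Fin (Nat.lcm q n / n * sDim p q n)) ℝ,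
      (∀ h : Fin n → ℝ, D h = stpQuadBil n A h x + stpQuadBil n A x h) ∧
        HasFDerivAt (fun y => stpQuadBil n A y y) D x ∧
        ∀ i : Fin n,
          D (fun j => if j = i then 1 else 0) =
            stpQuadBil n A (fun j => if j = i then 1 else 0) x +
              stpQuadBil n A x (fun j => if j = i then 1 else 0) := by
  let B := (isBilinearMap_stpQuadBil n A).toContinuousBilinearMap
  exact ⟨_, fun h => rfl, B.hasFDerivAt_apply_self x, fun i => rfl⟩

/-- **Derivative of an STP-quadratic form**: with `l = lcm(q,n)`, `t = lcm(pl/q, n)`,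
`F(x) = A ⋉ x = (A ⊗ I_{l/q})(X ⊗ I_{l/n})` and
`Q(x) = xᵀ ⋉ A ⋉ x = (Xᵀ ⊗ I_{t/n})(F(x) ⊗ I_{tq/(pl)})`, at every `x ∈ ℝⁿ` the Fréchet
derivative of `Q` in direction `h` equals
`(Hᵀ ⊗ I_{t/n})(F(x) ⊗ I_{tq/(pl)}) + (Xᵀ ⊗ I_{t/n})(F(h) ⊗ I_{tq/(pl)})`; equivalently the
partial derivative with respect to `xᵢ` is
`(Eᵢᵀ ⊗ I_{t/n})(F(x) ⊗ I_{tq/(pl)}) + (Xᵀ ⊗ I_{t/n})(F(eᵢ) ⊗ I_{tq/(pl)})`. -/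
theorem stp_quadratic_deriv (p q n : ℕ) (hn : 1 ≤ n) (A : Matrix (Fin p) (Fin q) ℝ)
    (x : Fin n → ℝ) :
    ∃ D : (Fin n → ℝ) →L[ℝ]
        Matrix (Fin (1 * (tDim p q n / n))) (Fin (Nat.lcm q n / n * sDim p q n)) ℝ,
      (∀ h : Fin n → ℝ, D h = stpQuadBil n A h x + stpQuadBil n A x h) ∧
        HasFDerivAt (fun y => stpQuadBil n A y y) D x ∧
        ∀ i : Fin n,
          D (fun j => if j = i then 1 else 0) =
            stpQuadBil n A (fun j => if j = i then 1 else 0) x +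
              stpQuadBil n A x (fun j => if j = i then 1 else 0) :=
  stp_quadratic_deriv_general p q n A x
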